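/- Let ε > 0, let I ⊆ ℝ be an interval, let κ : I → ℝ be twice continuously differentiable, and define z = κ/√(κ² + ε). Then z is twice continuously differentiable, and the following are equivalent on I: (i) κ''(s) − κ(s)³ − 3κ(s)(κ'(s))²/(κ(s)² + ε) = ε·κ(s) for all s ∈ I; (ii) z''(s) = ε·z(s) for all s ∈ I. In that case, for any s₀ ∈ I and all s ∈ I, z(s) = z(s₀)·cosh(√ε·(s − s₀)) + (z'(s₀)/√ε)·sinh(√ε·(s − s₀)). Moreover the identity κ(s)² = ε·z(s)²/(1 − z(s)²) holds for all s ∈ I. -/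

import Mathlib

/-!
Write `Q = √(κ² + ε)`, so that `z = κ / Q`. The quotient rule gives `z' = εκ'/Q³` and
`z'' = ε(κ'' − 3κκ'²/Q²)/Q³`; hence `z'' = εz` reads `κ'' − 3κκ'²/Q² = κQ² = κ³ + εκ`, which is (i).
The equation `z'' = εz` factors as `(d/ds ∓ √ε)(z' ± √ε z) = 0`, so `z' ± √ε z` is a multiple of
`e^{±√ε s}` on the interval, and `z` is their difference divided by `2√ε`.
Finally `1 − z² = ε/Q²`, which gives `κ² = εz²/(1 − z²)`.
-/

/-- The normalized curvature `z = κ/√(κ² + ε)`. -/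
noncomputable def zfun (ε : ℝ) (κ : ℝ → ℝ) (s : ℝ) : ℝ :=
  κ s / Real.sqrt ((κ s) ^ 2 + ε)

/-- The derivative of the normalized curvature: `z' = εκ'/(κ²+ε)^{3/2}`. -/
noncomputable def zdfun (ε : ℝ) (κ κd : ℝ → ℝ) (s : ℝ) : ℝ :=
  ε * κd s / ((κ s) ^ 2 + ε) ^ ((3 : ℝ) / 2)

open Real

theorem rpow_three_div_two_eq_sqrt_pow {x : ℝ} (hx : 0 ≤ x) : x ^ ((3 : ℝ) / 2) = √x ^ 3 := by
  rw [rpow_div_two_eq_sqrt 3 hx]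
  exact_mod_cast rpow_natCast √x 3

section NormalizedCurvature

variable {ε : ℝ} {κ κd κdd : ℝ → ℝ} {s : ℝ}

theorem zdfun_eq (hε : 0 ≤ ε) (κ κd : ℝ → ℝ) :
    zdfun ε κ κd = fun t => ε * κd t / √(κ t ^ 2 + ε) ^ 3 := by
  ext t
  rw [zdfun, rpow_three_div_two_eq_sqrt_pow (by positivity)]

theorem hasDerivAt_sqrt_sq_add (hε : 0 < ε) (hκ : HasDerivAt κ (κd s) s) :
    HasDerivAt (fun t => √(κ t ^ 2 + ε)) (κ s * κd s / √(κ s ^ 2 + ε)) s := by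
  have hsq := ((hκ.fun_pow 2).add_const ε).sqrt (by positivity)
  exact hsq.congr_deriv (by push_cast; ring)

theorem hasDerivAt_zfun (hε : 0 < ε) (hκ : HasDerivAt κ (κd s) s) :
    HasDerivAt (zfun ε κ) (zdfun ε κ κd s) s := by
  have hQ : 0 < √(κ s ^ 2 + ε) := by positivity
  have hQsq : √(κ s ^ 2 + ε) ^ 2 = κ s ^ 2 + ε := sq_sqrt (by positivity)
  refine (hκ.div (hasDerivAt_sqrt_sq_add hε hκ) hQ.ne').congr_deriv ?_
  rw [zdfun_eq hε.le]
  field_simp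
  linear_combination κd s * hQsq

theorem hasDerivAt_zdfun (hε : 0 < ε) (hκ : HasDerivAt κ (κd s) s)
    (hκd : HasDerivAt κd (κdd s) s) :
    HasDerivAt (zdfun ε κ κd)
      (ε * (κdd s - 3 * κ s * (κd s) ^ 2 / ((κ s) ^ 2 + ε))
        / ((κ s) ^ 2 + ε) ^ ((3 : ℝ) / 2)) s := by
  have hQ : 0 < √(κ s ^ 2 + ε) := by positivity
  have hQsq : √(κ s ^ 2 + ε) ^ 2 = κ s ^ 2 + ε := sq_sqrt (by positivity)
  rw [zdfun_eq hε.le, rpow_three_div_two_eq_sqrt_pow (by positivity)]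
  refine ((hκd.const_mul ε).div ((hasDerivAt_sqrt_sq_add hε hκ).fun_pow 3)
    (pow_ne_zero 3 hQ.ne')).congr_deriv ?_
  generalize √(κ s ^ 2 + ε) = Q at hQ hQsq ⊢
  rw [← hQsq]
  field_simp
  ring

theorem euler_lagrange_iff (hε : 0 < ε) (k k' k'' : ℝ) :
    ε * (k'' - 3 * k * k' ^ 2 / (k ^ 2 + ε)) / (k ^ 2 + ε) ^ ((3 : ℝ) / 2)
        = ε * (k / √(k ^ 2 + ε)) ↔
      k'' - k ^ 3 - 3 * k * k' ^ 2 / (k ^ 2 + ε) = ε * k := by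
  have hQ : 0 < √(k ^ 2 + ε) := by positivity
  have hQsq : √(k ^ 2 + ε) ^ 2 = k ^ 2 + ε := sq_sqrt (by positivity)
  have hrhs : ε * (k / √(k ^ 2 + ε)) * √(k ^ 2 + ε) ^ 3 = ε * (k * (k ^ 2 + ε)) := by
    generalize √(k ^ 2 + ε) = Q at hQ hQsq ⊢
    rw [← hQsq]; field_simp
  rw [rpow_three_div_two_eq_sqrt_pow (by positivity), div_eq_iff (by positivity), hrhs,
    mul_right_inj' hε.ne']
  constructor <;> intro h <;> linear_combination h

theorem sq_eq_of_normalized_curvature (hε : 0 < ε) (k : ℝ) :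
    k ^ 2 = ε * (k / √(k ^ 2 + ε)) ^ 2 / (1 - (k / √(k ^ 2 + ε)) ^ 2) := by
  have hP : 0 < k ^ 2 + ε := by positivity
  rw [div_pow, sq_sqrt hP.le, one_sub_div hP.ne', add_sub_cancel_left]
  field_simp

end NormalizedCurvature

theorem Convex.eq_mul_exp_of_hasDerivAt {I : Set ℝ} (hI : Convex ℝ I) {f : ℝ → ℝ} {c : ℝ}
    (hf : ∀ t ∈ I, HasDerivAt f (c * f t) t) {s₀ s : ℝ} (hs₀ : s₀ ∈ I) (hs : s ∈ I) :
    f s = f s₀ * exp (c * (s - s₀)) := by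
  have hderiv : ∀ t ∈ I, HasDerivWithinAt (fun t => f t * exp (-(c * t))) 0 I t := by
    intro t ht
    have he : HasDerivAt (fun t => exp (-(c * t))) (exp (-(c * t)) * -c) t := by
      simpa using ((hasDerivAt_id t).const_mul c).neg.exp
    exact ((hf t ht).mul he).hasDerivWithinAt.congr_deriv (by ring)
  have hconst := hI.norm_image_sub_le_of_norm_hasDerivWithin_le hderiv
    (fun _ _ => (norm_zero (E := ℝ)).le) hs₀ hs
  rw [zero_mul, norm_le_zero_iff, sub_eq_zero] at hconst
  calc f s = f s * exp (-(c * s)) * exp (c * s) := by rw [mul_assoc, ← exp_add]; simp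
    _ = f s₀ * exp (c * (s - s₀)) := by rw [hconst, mul_assoc, ← exp_add]; ring_nf

theorem Convex.eq_cosh_sinh_of_hasDerivAt {I : Set ℝ} (hI : Convex ℝ I) {f f' : ℝ → ℝ} {q : ℝ}
    (hq : q ≠ 0) (hf : ∀ t ∈ I, HasDerivAt f (f' t) t)
    (hf' : ∀ t ∈ I, HasDerivAt f' (q ^ 2 * f t) t) {s₀ s : ℝ} (hs₀ : s₀ ∈ I) (hs : s ∈ I) :
    f s = f s₀ * cosh (q * (s - s₀)) + f' s₀ / q * sinh (q * (s - s₀)) := by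
  have hplus := hI.eq_mul_exp_of_hasDerivAt (f := fun t => f' t + q * f t) (c := q)
    (fun t ht => ((hf' t ht).add ((hf t ht).const_mul q)).congr_deriv (by ring)) hs₀ hs
  have hminus := hI.eq_mul_exp_of_hasDerivAt (f := fun t => f' t - q * f t) (c := -q)
    (fun t ht => ((hf' t ht).sub ((hf t ht).const_mul q)).congr_deriv (by ring)) hs₀ hs
  rw [neg_mul] at hminus
  rw [cosh_eq, sinh_eq]
  field_simp
  linear_combination hplus - hminus

theorem stmt_16 (ε : ℝ) (hε : 0 < ε) (I : Set ℝ) (hI : Convex ℝ I)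
    (κ κd κdd : ℝ → ℝ)
    (hκ : ∀ s ∈ I, HasDerivAt κ (κd s) s)
    (hκd : ∀ s ∈ I, HasDerivAt κd (κdd s) s) :
    -- z is twice differentiable on I, with the explicit first and second derivatives
    (∀ s ∈ I, HasDerivAt (zfun ε κ) (zdfun ε κ κd s) s) ∧
    (∀ s ∈ I, HasDerivAt (zdfun ε κ κd)
        (ε * (κdd s - 3 * κ s * (κd s) ^ 2 / ((κ s) ^ 2 + ε))
          / ((κ s) ^ 2 + ε) ^ ((3 : ℝ) / 2)) s) ∧
    -- (i) ⟺ (ii)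
    ((∀ s ∈ I, κdd s - (κ s) ^ 3 - 3 * κ s * (κd s) ^ 2 / ((κ s) ^ 2 + ε) = ε * κ s) ↔
      (∀ s ∈ I, HasDerivAt (zdfun ε κ κd) (ε * zfun ε κ s) s)) ∧
    -- in that case, the cosh/sinh formula
    ((∀ s ∈ I, HasDerivAt (zdfun ε κ κd) (ε * zfun ε κ s) s) →
      ∀ s₀ ∈ I, ∀ s ∈ I,
        zfun ε κ s = zfun ε κ s₀ * Real.cosh (Real.sqrt ε * (s - s₀))
          + (zdfun ε κ κd s₀ / Real.sqrt ε) * Real.sinh (Real.sqrt ε * (s - s₀))) ∧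
    -- κ² = εz²/(1 − z²)
    (∀ s ∈ I, (κ s) ^ 2 = ε * (zfun ε κ s) ^ 2 / (1 - (zfun ε κ s) ^ 2)) := by
  have hzd := fun s hs => hasDerivAt_zdfun hε (hκ s hs) (hκd s hs)
  refine ⟨fun s hs => hasDerivAt_zfun hε (hκ s hs), hzd, ?_, ?_,
    fun s _ => sq_eq_of_normalized_curvature hε (κ s)⟩
  · refine forall₂_congr fun s hs => ?_
    rw [← euler_lagrange_iff hε]
    exact ⟨fun h => by rw [zfun, ← h]; exact hzd s hs, fun h => (hzd s hs).unique h⟩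
  · intro hEL s₀ hs₀ s hs
    refine hI.eq_cosh_sinh_of_hasDerivAt (sqrt_pos.2 hε).ne'
      (fun t ht => hasDerivAt_zfun hε (hκ t ht)) (fun t ht => ?_) hs₀ hs
    rw [sq_sqrt hε.le]
    exact hEL t ht
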